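/- Let (X, D) be a locally compact, complete metric space, α > 1, and Ω ⊆ X an open set with D_α(Ω) ≠ ∅. Let (d_n)_{n∈ℕ} ⊆ D_α(Ω) and d ∈ D_α(Ω). If d_n → d uniformly on compact subsets of Ω × Ω, then the length functionals L_{d̄_n} Γ-converge to L_{d̄} on Lip([0,1]; Ω̄) equipped with the topology of uniform convergence: (liminf) for every sequence of Lipschitz curves γⁿ : [0,1] → Ω̄ converging uniformly to a Lipschitz curve γ, one has L_{d̄}(γ) ≤ liminf_n L_{d̄_n}(γⁿ); (limsup) for every Lipschitz curve γ : [0,1] → Ω̄ there exist Lipschitz curves γⁿ converging uniformly to γ with limsup_n L_{d̄_n}(γⁿ) ≤ L_{d̄}(γ). -/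

import Mathlib

open Filter MeasureTheory Set
open scoped ENNReal Topology

/-- Length of the curve `γ` on the interval `[a, b]`, with respect to the
(candidate) distance `d`, defined as a supremum over finite partitions. -/
noncomputable def pathLengthOn {E : Type*} (d : E → E → ℝ) (γ : ℝ → E) (a b : ℝ) : ℝ≥0∞ :=
  ⨆ (k : ℕ) (t : Fin (k + 1) → ℝ) (_ : Monotone t) (_ : t 0 = a) (_ : t (Fin.last k) = b),
    ∑ i : Fin k, ENNReal.ofReal (d (γ (t i.succ)) (γ (t i.castSucc)))

/-- Length of the curve `γ : [0,1] → E` with respect to `d`. -/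
noncomputable def pathLength {E : Type*} (d : E → E → ℝ) (γ : ℝ → E) : ℝ≥0∞ :=
  pathLengthOn d γ 0 1

/-- `d` is a distance on `E`. -/
def IsDistance {E : Type*} (d : E → E → ℝ) : Prop :=
  (∀ x y, d x y = d y x) ∧ (∀ x y z, d x z ≤ d x y + d y z) ∧ ∀ x y, d x y = 0 ↔ x = y

/-- `γ : [0,1] → E` is a Lipschitz curve with respect to `d`. -/
def LipCurve {E : Type*} (d : E → E → ℝ) (γ : ℝ → E) : Prop :=
  ∃ K : ℝ, ∀ s ∈ Icc (0 : ℝ) 1, ∀ t ∈ Icc (0 : ℝ) 1, d (γ s) (γ t) ≤ K * |s - t|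

/-- `(E, d)` is a length space: `d x y` is the infimum of lengths of Lipschitz
curves `γ : [0,1] → E` joining `x` to `y`. -/
def IsLengthDist {E : Type*} (d : E → E → ℝ) : Prop :=
  ∀ x y : E, ENNReal.ofReal (d x y) =
    ⨅ (γ : ℝ → E) (_ : LipCurve d γ) (_ : γ 0 = x) (_ : γ 1 = y), pathLength d γ

/-- `d ∈ 𝒟_α(Ω)` : `d` is a distance on `Ω` making it a length space and satisfying
`α⁻¹ D ≤ d ≤ α D`. -/
def MemD {X : Type*} [MetricSpace X] (α : ℝ) (Ω : Set X) (d : Ω → Ω → ℝ) : Prop :=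
  IsDistance d ∧ IsLengthDist d ∧
    ∀ x y : Ω, α⁻¹ * dist (x : X) (y : X) ≤ d x y ∧ d x y ≤ α * dist (x : X) (y : X)

/-- Uniform convergence `dn → d` on compact subsets of `E × E`. -/
def TendstoUnifCompactly {E : Type*} [TopologicalSpace E]
    (dn : ℕ → E → E → ℝ) (d : E → E → ℝ) : Prop :=
  ∀ K : Set (E × E), IsCompact K → ∀ ε : ℝ, 0 < ε →
    ∃ N : ℕ, ∀ n ≥ N, ∀ p ∈ K, |dn n p.1 p.2 - d p.1 p.2| < ε

/-- `e` is a continuous extension of `d : Ω → Ω → ℝ` to the closure of `Ω`. -/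
def IsContExt {X : Type*} [MetricSpace X] (Ω : Set X) (d : Ω → Ω → ℝ)
    (e : closure Ω → closure Ω → ℝ) : Prop :=
  Continuous (fun p : closure Ω × closure Ω => e p.1 p.2) ∧
    ∀ x y : Ω, e ⟨x, subset_closure x.2⟩ ⟨y, subset_closure y.2⟩ = d x y

/-- `(E, d)` is a geodesic space: any two points are joined by a constant-speed curve
`γ : [0,1] → E` whose length on each subinterval `[t,s]` equals `d (γ t) (γ s)`. -/
def IsGeodesicDist {E : Type*} (d : E → E → ℝ) : Prop :=
  ∀ x y : E, ∃ γ : ℝ → E, γ 0 = x ∧ γ 1 = y ∧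
    (∀ t s : ℝ, 0 ≤ t → t ≤ s → s ≤ 1 →
      pathLengthOn d γ t s = pathLength d γ * ENNReal.ofReal (s - t)) ∧
    ∀ t s : ℝ, 0 ≤ t → t ≤ s → s ≤ 1 →
      pathLengthOn d γ t s = ENNReal.ofReal (d (γ t) (γ s))

/-- Uniform convergence on `[0,1]` of a sequence of curves. -/
def UnifConvCurves {E : Type*} [MetricSpace E] (γn : ℕ → ℝ → E) (γ : ℝ → E) : Prop :=
  ∀ ε : ℝ, 0 < ε → ∃ N : ℕ, ∀ n ≥ N, ∀ t ∈ Icc (0 : ℝ) 1, dist (γn n t) (γ t) < ε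

/-- Γ-convergence of the length functionals `L_{dn}` to `L_d` on the space of
Lipschitz curves `[0,1] → E` with the topology of uniform convergence. -/
def GammaConvLengths {E : Type*} [MetricSpace E] (dn : ℕ → E → E → ℝ) (d : E → E → ℝ) : Prop :=
  (∀ (γn : ℕ → ℝ → E) (γ : ℝ → E),
      (∀ n, LipCurve (fun x y : E => dist x y) (γn n)) →
      LipCurve (fun x y : E => dist x y) γ → UnifConvCurves γn γ →
      pathLength d γ ≤ liminf (fun n => pathLength (dn n) (γn n)) atTop) ∧
  ∀ γ : ℝ → E, LipCurve (fun x y : E => dist x y) γ →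
    ∃ γn : ℕ → ℝ → E, (∀ n, LipCurve (fun x y : E => dist x y) (γn n)) ∧
      UnifConvCurves γn γ ∧
      limsup (fun n => pathLength (dn n) (γn n)) atTop ≤ pathLength d γ

/-!
Every distance in play is `α`-bi-Lipschitz to `D`, so the functions `en n` are equi-Lipschitz on
`closure Ω × closure Ω`; pointwise convergence `dn → d` on the dense set `Ω × Ω` therefore gives
`en n xₙ yₙ → e x y` whenever `xₙ → x` and `yₙ → y`. The liminf inequality follows, since every
partition sum of `L_e(γ)` is then the limit of the corresponding partition sums of `L_{en n}(γₙ)`.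

For the recovery sequence, sample `γ` at the points `j / k`, move the samples into `Ω` by less than
`δ`, and join consecutive samples by `dn n`-curves of length at most `dn n + δ` (`Ω` is a length
space for `dn n`). For large `n` this is at most `d + 2δ`, hence at most the `e`-chord of `γ` plus
`(2α + 2)δ`; the concatenated curve therefore has length at most `L_e(γ) + k(2α + 2)δ` and stays
within `O(1/k + δ)` of `γ`. A diagonal choice of `k → ∞` and `δ → 0` gives the sequence.
-/

section PathLength

variable {E : Type*} {d : E → E → ℝ} {γ : ℝ → E}

theorem IsDistance.self_eq_zero (hd : IsDistance d) (x : E) : d x x = 0 :=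
  (hd.2.2 x x).2 rfl

theorem IsDistance.nonneg (hd : IsDistance d) (x y : E) : 0 ≤ d x y := by
  have h := hd.2.1 x y x
  rw [hd.self_eq_zero, hd.1 y x] at h
  linarith

theorem sum_le_pathLengthOn {a b : ℝ} (k : ℕ) (t : Fin (k + 1) → ℝ) (ht : Monotone t)
    (h0 : t 0 = a) (hk : t (Fin.last k) = b) :
    ∑ i : Fin k, ENNReal.ofReal (d (γ (t i.succ)) (γ (t i.castSucc))) ≤ pathLengthOn d γ a b :=
  le_iSup_of_le k <| le_iSup_of_le t <| le_iSup_of_le ht <| le_iSup_of_le h0 <|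
    le_iSup_of_le hk le_rfl

theorem ofReal_le_pathLengthOn {a τ b : ℝ} (haτ : a ≤ τ) (hτb : τ ≤ b) :
    ENNReal.ofReal (d (γ τ) (γ a)) ≤ pathLengthOn d γ a b := by
  have hmono : Monotone ![a, τ, b] :=
    Fin.monotone_iff_le_succ.2 fun i => by fin_cases i <;> simpa
  refine le_trans ?_ (sum_le_pathLengthOn 2 ![a, τ, b] hmono rfl rfl)
  simp [Fin.sum_univ_two]

theorem pathLengthOn_self (hd : IsDistance d) (a : ℝ) : pathLengthOn d γ a a = 0 := by
  refine le_antisymm (iSup_le fun k => iSup_le fun t => iSup_le fun ht => iSup_le fun h0 =>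
    iSup_le fun hk => ?_) zero_le
  have hta : ∀ i, t i = a := fun i =>
    le_antisymm (hk ▸ ht (Fin.le_last i)) (h0 ▸ ht (Fin.zero_le i))
  simp [hta, hd.self_eq_zero]

theorem pathLengthOn_le_of_eqOn_comp {γ' : ℝ → E} {φ : ℝ → ℝ} (hφ : Monotone φ) {a b : ℝ}
    (h : EqOn γ (γ' ∘ φ) (Icc a b)) :
    pathLengthOn d γ a b ≤ pathLengthOn d γ' (φ a) (φ b) := by
  refine iSup_le fun k => iSup_le fun t => iSup_le fun ht => iSup_le fun h0 => iSup_le fun hk => ?_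
  have hmem : ∀ i, t i ∈ Icc a b := fun i =>
    ⟨h0 ▸ ht (Fin.zero_le i), hk ▸ ht (Fin.le_last i)⟩
  simp only [h (hmem _)]
  exact sum_le_pathLengthOn k (φ ∘ t) (hφ.comp ht) (congrArg φ h0) (congrArg φ hk)

theorem pathLengthOn_comp_of_dist_eq {E' : Type*} {d' : E' → E' → ℝ} {f : E → E'}
    (hf : ∀ x y, d' (f x) (f y) = d x y) (a b : ℝ) :
    pathLengthOn d' (fun s => f (γ s)) a b = pathLengthOn d γ a b := by
  simp only [pathLengthOn, hf]

theorem pathLengthOn_le_add (hd : IsDistance d) {a b c : ℝ} (hab : a ≤ b) (hbc : b ≤ c) :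
    pathLengthOn d γ a c ≤ pathLengthOn d γ a b + pathLengthOn d γ b c := by
  refine iSup_le fun k => iSup_le fun t => iSup_le fun ht => iSup_le fun h0 => iSup_le fun hk => ?_
  -- split the partition at `b`: its points clamped to `[a, b]` and to `[b, c]`
  have key : ∀ i : Fin k, ENNReal.ofReal (d (γ (t i.succ)) (γ (t i.castSucc))) ≤
      ENNReal.ofReal (d (γ (min (t i.succ) b)) (γ (min (t i.castSucc) b))) +
      ENNReal.ofReal (d (γ (max (t i.succ) b)) (γ (max (t i.castSucc) b))) := by
    intro i
    have hi : t i.castSucc ≤ t i.succ := ht (Fin.castSucc_le_succ i)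
    rcases le_total (t i.succ) b with h₁ | h₁
    · simp [min_eq_left h₁, min_eq_left (hi.trans h₁), max_eq_right h₁,
        max_eq_right (hi.trans h₁), hd.self_eq_zero]
    rcases le_total b (t i.castSucc) with h₂ | h₂
    · simp [min_eq_right h₂, min_eq_right (h₂.trans hi), max_eq_left h₂,
        max_eq_left (h₂.trans hi), hd.self_eq_zero]
    rw [min_eq_right h₁, min_eq_left h₂, max_eq_left h₁, max_eq_right h₂, add_comm]
    exact (ENNReal.ofReal_le_ofReal (hd.2.1 _ _ _)).trans ENNReal.ofReal_add_le
  refine (Finset.sum_le_sum fun i _ => key i).trans ?_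
  rw [Finset.sum_add_distrib]
  refine add_le_add (sum_le_pathLengthOn k (fun i => min (t i) b)
    (fun i j hij => min_le_min_right b (ht hij)) ?_ ?_) (sum_le_pathLengthOn k
    (fun i => max (t i) b) (fun i j hij => max_le_max_right b (ht hij)) ?_ ?_)
  all_goals simp [h0, hk, hab, hbc]

theorem pathLengthOn_le_sum_range (hd : IsDistance d) {u : ℕ → ℝ} (hu : Monotone u) (m : ℕ) :
    pathLengthOn d γ (u 0) (u m) ≤ ∑ j ∈ Finset.range m, pathLengthOn d γ (u j) (u (j + 1)) := by
  induction m with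
  | zero => simp [pathLengthOn_self hd]
  | succ m ih =>
    rw [Finset.sum_range_succ]
    exact (pathLengthOn_le_add hd (hu m.zero_le) (hu m.le_succ)).trans (add_le_add_left ih _)

theorem sum_range_le_pathLength (γ : ℝ → E) {k : ℕ} (hk : 0 < k) :
    ∑ j ∈ Finset.range k, ENNReal.ofReal (d (γ ((j + 1) / k)) (γ (j / k))) ≤
      pathLength d γ := by
  have hmono : Monotone fun i : Fin (k + 1) => (i : ℝ) / k := fun i j hij =>
    div_le_div_of_nonneg_right (by exact_mod_cast hij) k.cast_nonneg
  have h := sum_le_pathLengthOn (d := d) (γ := γ) (a := 0) (b := 1) k _ hmono (by simp)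
    (by simp [(Nat.cast_pos.2 hk).ne'])
  simp only [Fin.val_succ, Fin.val_castSucc, Nat.cast_add, Nat.cast_one] at h
  rwa [Fin.sum_univ_eq_sum_range (fun j => ENNReal.ofReal (d (γ ((j + 1) / k)) (γ (j / k))))]
    at h

end PathLength

section Curves

variable {E : Type*} {d : E → E → ℝ} {γ : ℝ → E}

theorem LipCurve.mono {d' : E → E → ℝ} {c : ℝ} (hc : 0 ≤ c) (h : ∀ x y, d' x y ≤ c * d x y)
    (hγ : LipCurve d γ) : LipCurve d' γ :=
  let ⟨K, hK⟩ := hγ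
  ⟨c * K, fun s hs t ht => (h _ _).trans <| by
    rw [mul_assoc]; exact mul_le_mul_of_nonneg_left (hK s hs t ht) hc⟩

theorem LipCurve.eventually_atTop (hγ : LipCurve d γ) :
    ∀ᶠ M in atTop, ∀ s ∈ Icc (0 : ℝ) 1, ∀ t ∈ Icc (0 : ℝ) 1, d (γ s) (γ t) ≤ M * |s - t| := by
  obtain ⟨K, hK⟩ := hγ
  filter_upwards [eventually_ge_atTop K] with M hM s hs t ht
  exact (hK s hs t ht).trans (mul_le_mul_of_nonneg_right hM (abs_nonneg _))

theorem IsLengthDist.exists_lipCurve_pathLength_lt (hd : IsLengthDist d) (x y : E) {η : ℝ}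
    (hη : 0 < η) : ∃ σ : ℝ → E, LipCurve d σ ∧ σ 0 = x ∧ σ 1 = y ∧
      pathLength d σ < ENNReal.ofReal (d x y) + ENNReal.ofReal η := by
  have h : ENNReal.ofReal (d x y) < ENNReal.ofReal (d x y) + ENNReal.ofReal η :=
    ENNReal.lt_add_right ENNReal.ofReal_ne_top (ENNReal.ofReal_pos.2 hη).ne'
  rw [hd x y] at h
  simp only [iInf_lt_iff] at h
  obtain ⟨σ, hσ, h0, h1, hlt⟩ := h
  exact ⟨σ, hσ, h0, h1, (hd x y).symm ▸ hlt⟩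

end Curves


section Concat

variable {E : Type*}

noncomputable def concatCurves (σ : ℕ → ℝ → E) (x : ℝ) : E :=
  σ ⌊x⌋₊ (x - ⌊x⌋₊)

variable {σ : ℕ → ℝ → E}

theorem concatCurves_eq (hσ : ∀ j, σ j 1 = σ (j + 1) 0) {j : ℕ} {x : ℝ} (h₁ : (j : ℝ) ≤ x)
    (h₂ : x ≤ j + 1) : concatCurves σ x = σ j (x - j) := by
  rcases h₂.lt_or_eq with h₂ | rfl
  · rw [concatCurves, (Nat.floor_eq_iff ((Nat.cast_nonneg j).trans h₁)).2 ⟨h₁, h₂⟩]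
  · rw [concatCurves, ← Nat.cast_add_one, Nat.floor_natCast, sub_self, ← hσ, Nat.cast_add_one,
      add_sub_cancel_left]

theorem exists_lt_le_le_add_one {k : ℕ} (hk : 0 < k) {x : ℝ} (h₀ : 0 ≤ x) (h₁ : x ≤ k) :
    ∃ j < k, (j : ℝ) ≤ x ∧ x ≤ j + 1 := by
  rcases h₁.lt_or_eq with h₁ | rfl
  · exact ⟨⌊x⌋₊, (Nat.floor_lt h₀).2 h₁, Nat.floor_le h₀, (Nat.lt_floor_add_one x).le⟩
  · refine ⟨k - 1, Nat.sub_lt hk one_pos, ?_, ?_⟩ <;> simp [Nat.cast_sub (Nat.one_le_of_lt hk)]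

theorem pathLengthOn_concatCurves_le (d : E → E → ℝ) (hσ : ∀ j, σ j 1 = σ (j + 1) 0) (j : ℕ) :
    pathLengthOn d (concatCurves σ) j (j + 1) ≤ pathLength d (σ j) := by
  have h := pathLengthOn_le_of_eqOn_comp (d := d) (γ' := σ j) (φ := fun x => x - j)
    (fun _ _ h => sub_le_sub_right h _) fun x hx => concatCurves_eq hσ hx.1 hx.2
  simpa [pathLength] using h

theorem pathLength_concatCurves_le_sum {d : E → E → ℝ} (hd : IsDistance d)
    (hσ : ∀ j, σ j 1 = σ (j + 1) 0) (k : ℕ) :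
    pathLength d (fun s => concatCurves σ (k * s)) ≤
      ∑ j ∈ Finset.range k, pathLength d (σ j) := by
  have h := pathLengthOn_le_sum_range (γ := concatCurves σ) hd Nat.mono_cast k
  simp only [Nat.cast_zero, Nat.cast_add_one] at h
  calc pathLength d (fun s => concatCurves σ (k * s))
      ≤ pathLengthOn d (concatCurves σ) (k * 0) (k * 1) :=
        pathLengthOn_le_of_eqOn_comp (φ := fun s => k * s)
          (fun a b hab => mul_le_mul_of_nonneg_left hab k.cast_nonneg) fun _ _ => rfl
    _ ≤ ∑ j ∈ Finset.range k, pathLength d (σ j) := by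
        rw [mul_zero, mul_one]
        exact h.trans (Finset.sum_le_sum fun j _ => pathLengthOn_concatCurves_le d hσ j)

theorem dist_le_mul_of_forall_Icc_nat [PseudoMetricSpace E] {f : ℝ → E} {M : ℝ} {k : ℕ}
    (h : ∀ j < k, ∀ x y : ℝ, j ≤ x → x ≤ y → y ≤ j + 1 → dist (f x) (f y) ≤ M * (y - x))
    (x y : ℝ) (hx : 0 ≤ x) (hxy : x ≤ y) (hy : y ≤ k) : dist (f x) (f y) ≤ M * (y - x) := by
  induction k generalizing x y with
  | zero =>
    obtain rfl : x = y := le_antisymm hxy (by simpa using hy.trans (by simpa using hx))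
    simp
  | succ k ih =>
    have ih := ih fun j hj => h j (Nat.lt_succ_of_lt hj)
    push_cast at hy
    by_cases hyk : y ≤ k
    · exact ih x y hx hxy hyk
    by_cases hxk : (k : ℝ) ≤ x
    · exact h k k.lt_succ_self x y hxk hxy hy
    push Not at hyk hxk
    calc dist (f x) (f y) ≤ dist (f x) (f k) + dist (f (k : ℝ)) (f y) := dist_triangle _ _ _
      _ ≤ M * (k - x) + M * (y - k) :=
        add_le_add (ih x k hx hxk.le le_rfl) (h k k.lt_succ_self _ _ le_rfl hyk.le hy)
      _ = M * (y - x) := by ring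

theorem dist_concatCurves_le [PseudoMetricSpace E] (hσ : ∀ j, σ j 1 = σ (j + 1) 0) {M : ℝ}
    {k : ℕ} (hM : ∀ j < k, ∀ a ∈ Icc (0 : ℝ) 1, ∀ b ∈ Icc (0 : ℝ) 1,
      dist (σ j a) (σ j b) ≤ M * |a - b|)
    {x y : ℝ} (hx : 0 ≤ x) (hxy : x ≤ y) (hy : y ≤ k) :
    dist (concatCurves σ x) (concatCurves σ y) ≤ M * (y - x) := by
  refine dist_le_mul_of_forall_Icc_nat (fun j hj x y hjx hxy hy => ?_) x y hx hxy hy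
  rw [concatCurves_eq hσ hjx (hxy.trans hy), concatCurves_eq hσ (hjx.trans hxy) hy]
  convert hM j hj (x - j) ⟨by linarith, by linarith⟩ (y - j) ⟨by linarith, by linarith⟩ using 2
  rw [abs_of_nonpos (by linarith)]
  ring

theorem lipCurve_concatCurves [PseudoMetricSpace E] {σ : ℕ → ℝ → E}
    (hσ : ∀ j, σ j 1 = σ (j + 1) 0) {k : ℕ}
    (hlip : ∀ j < k, LipCurve (fun x y : E => dist x y) (σ j)) :
    LipCurve (fun x y : E => dist x y) fun s => concatCurves σ (k * s) := by
  obtain ⟨M, hM⟩ := ((Finset.range k).eventually_all.2 fun j hj =>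
    (hlip j (Finset.mem_range.1 hj)).eventually_atTop).exists
  have hk : (0 : ℝ) ≤ k := k.cast_nonneg
  refine ⟨M * k, fun s hs t ht => ?_⟩
  dsimp only
  rcases le_total s t with hst | hts
  · refine (dist_concatCurves_le hσ (fun j hj => hM j (Finset.mem_range.2 hj))
      (by nlinarith [hs.1]) (by nlinarith) (by nlinarith [ht.2])).trans_eq ?_
    rw [abs_of_nonpos (by linarith)]
    ring
  · rw [dist_comm]
    refine (dist_concatCurves_le hσ (fun j hj => hM j (Finset.mem_range.2 hj))
      (by nlinarith [ht.1]) (by nlinarith) (by nlinarith [hs.2])).trans_eq ?_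
    rw [abs_of_nonneg (by linarith)]
    ring

theorem dist_concatCurves_le_add [PseudoMetricSpace E] (hσ : ∀ j, σ j 1 = σ (j + 1) 0)
    {γ : ℝ → E} {K : ℝ}
    (hγ : ∀ s ∈ Icc (0 : ℝ) 1, ∀ t ∈ Icc (0 : ℝ) 1, dist (γ s) (γ t) ≤ K * |s - t|)
    {k : ℕ} (hk : 0 < k) {R : ℝ}
    (hσγ : ∀ j < k, ∀ τ ∈ Icc (0 : ℝ) 1, dist (σ j τ) (γ (j / k)) ≤ R)
    {s : ℝ} (hs : s ∈ Icc (0 : ℝ) 1) : dist (concatCurves σ (k * s)) (γ s) ≤ R + K / k := by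
  have hkR : (0 : ℝ) < k := Nat.cast_pos.2 hk
  obtain ⟨j, hj, hjs, hsj⟩ := exists_lt_le_le_add_one hk (x := k * s) (by nlinarith [hs.1])
    (by nlinarith [hs.2])
  have hjs' : |(j : ℝ) / k - s| ≤ 1 / k := by
    rw [abs_sub_le_iff, div_sub' hkR.ne', sub_div' hkR.ne', div_le_div_iff_of_pos_right hkR,
      div_le_div_iff_of_pos_right hkR]
    constructor <;> linarith
  have hK : 0 ≤ K := by simpa using dist_nonneg.trans (hγ 0 (by simp) 1 (by simp))
  rw [concatCurves_eq hσ hjs hsj]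
  refine (dist_triangle _ (γ (j / k)) _).trans (add_le_add (hσγ j hj _ ⟨by linarith, by linarith⟩)
    ((hγ _ ⟨by positivity, (div_le_one hkR).2 (by exact_mod_cast hj.le)⟩ s hs).trans ?_))
  exact (mul_le_mul_of_nonneg_left hjs' hK).trans_eq (mul_one_div K k)

end Concat

theorem abs_sub_le_mul_dist_add_dist {E : Type*} [PseudoMetricSpace E] {α : ℝ}
    {e : E → E → ℝ} (hsymm : ∀ x y, e x y = e y x) (htri : ∀ x y z, e x z ≤ e x y + e y z)
    (hle : ∀ x y, e x y ≤ α * dist x y) (x y x' y' : E) :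
    |e x y - e x' y'| ≤ α * (dist x x' + dist y y') := by
  have h₁ : e x y ≤ e x x' + e x' y' + e y y' := by
    linarith [htri x x' y, htri x' y' y, hsymm y' y]
  have h₂ : e x' y' ≤ e x x' + e x y + e y y' := by
    linarith [htri x' x y', htri x y y', hsymm x' x]
  rw [abs_sub_le_iff]
  constructor <;> linarith [hle x x', hle y y']

theorem tendsto_apply_of_lipschitzWith_of_denseRange {Y Z W : Type*} [PseudoMetricSpace Y]
    [PseudoMetricSpace W] {F : ℕ → Y → W} {f : Y → W} {L : NNReal}
    (hF : ∀ n, LipschitzWith L (F n)) (hf : Continuous f) {ι : Z → Y} (hι : DenseRange ι)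
    (hpt : ∀ z, Tendsto (fun n => F n (ι z)) atTop (𝓝 (f (ι z))))
    {ys : ℕ → Y} {y : Y} (hy : Tendsto ys atTop (𝓝 y)) :
    Tendsto (fun n => F n (ys n)) atTop (𝓝 (f y)) := by
  -- an equicontinuous family converges on a closed set, which contains the dense range of `ι`
  have hFy : Tendsto (fun n => F n y) atTop (𝓝 (f y)) := hι.induction_on y
    ((LipschitzWith.uniformEquicontinuous F L hF).equicontinuous.isClosed_setOfPred_tendsto hf)
    hpt
  rw [tendsto_iff_dist_tendsto_zero] at hy hFy ⊢
  refine squeeze_zero (fun n => dist_nonneg) (fun n => (dist_triangle _ (F n y) _).trans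
    (add_le_add_left ((hF n).dist_le_mul _ _) _)) ?_
  simpa using (hy.const_mul (L : ℝ)).add hFy

theorem TendstoUnifCompactly.tendsto {E : Type*} [TopologicalSpace E] {dn : ℕ → E → E → ℝ}
    {d : E → E → ℝ} (h : TendstoUnifCompactly dn d) (x y : E) :
    Tendsto (fun n => dn n x y) atTop (𝓝 (d x y)) := by
  refine Metric.tendsto_atTop.2 fun ε hε => ?_
  obtain ⟨N, hN⟩ := h {(x, y)} isCompact_singleton ε hε
  exact ⟨N, fun n hn => hN n hn (x, y) rfl⟩

section Extension

variable {X : Type*} [MetricSpace X] {Ω : Set X} {α : ℝ} {d : Ω → Ω → ℝ}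
  {e : closure Ω → closure Ω → ℝ}

theorem denseRange_inclusion_subset_closure :
    DenseRange (inclusion (subset_closure : Ω ⊆ closure Ω)) :=
  (denseRange_inclusion_iff subset_closure).2 subset_rfl

theorem MemD.dist_le (hα : 0 < α) (hd : MemD α Ω d) (x y : Ω) : dist x y ≤ α * d x y := by
  have := mul_le_mul_of_nonneg_left (hd.2.2 x y).1 hα.le
  rwa [← mul_assoc, mul_inv_cancel₀ hα.ne', one_mul] at this

theorem MemD.dist_le_of_pathLength_le (hα : 0 < α) (hd : MemD α Ω d) {σ : ℝ → Ω} {τ B : ℝ}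
    (hτ : τ ∈ Icc (0 : ℝ) 1) (hB : 0 ≤ B) (h : pathLength d σ ≤ ENNReal.ofReal B) :
    dist (σ τ) (σ 0) ≤ α * B := by
  have hch := (ofReal_le_pathLengthOn hτ.1 hτ.2).trans h
  rw [ENNReal.ofReal_le_ofReal_iff hB] at hch
  exact (hd.dist_le hα _ _).trans (mul_le_mul_of_nonneg_left hch hα.le)

namespace IsContExt

theorem apply_inclusion (he : IsContExt Ω d e) (x y : Ω) :
    e (inclusion subset_closure x) (inclusion subset_closure y) = d x y :=
  he.2 x y

theorem symm (hd : IsDistance d) (he : IsContExt Ω d e) (x y : closure Ω) : e x y = e y x :=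
  denseRange_inclusion_subset_closure.induction_on₂ (p := fun x y => e x y = e y x)
    (isClosed_eq he.1 (he.1.comp continuous_swap))
    (fun a b => by simp only [he.apply_inclusion, hd.1 a b]) x y

theorem triangle (hd : IsDistance d) (he : IsContExt Ω d e) (x y z : closure Ω) :
    e x z ≤ e x y + e y z :=
  denseRange_inclusion_subset_closure.induction_on₃ (p := fun x y z => e x z ≤ e x y + e y z)
    (isClosed_le (he.1.comp (continuous_fst.prodMk continuous_snd.snd))
      ((he.1.comp (continuous_fst.prodMk continuous_snd.fst)).add
        (he.1.comp (continuous_snd.fst.prodMk continuous_snd.snd))))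
    (fun a b c => by simpa only [he.apply_inclusion] using hd.2.1 a b c) x y z

theorem nonneg (hd : IsDistance d) (he : IsContExt Ω d e) (x y : closure Ω) : 0 ≤ e x y :=
  denseRange_inclusion_subset_closure.induction_on₂ (p := fun x y => 0 ≤ e x y)
    (isClosed_le continuous_const he.1)
    (fun a b => (hd.nonneg a b).trans_eq (he.apply_inclusion a b).symm) x y

theorem le_mul_dist (hd : MemD α Ω d) (he : IsContExt Ω d e) (x y : closure Ω) :
    e x y ≤ α * dist x y :=
  denseRange_inclusion_subset_closure.induction_on₂ (p := fun x y => e x y ≤ α * dist x y)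
    (isClosed_le he.1 (continuous_const.mul continuous_dist))
    (fun a b => (he.apply_inclusion a b).trans_le (hd.2.2 a b).2) x y

theorem abs_sub_le (hd : MemD α Ω d) (he : IsContExt Ω d e) (x y x' y' : closure Ω) :
    |e x y - e x' y'| ≤ α * (dist x x' + dist y y') :=
  abs_sub_le_mul_dist_add_dist (he.symm hd.1) (he.triangle hd.1) (he.le_mul_dist hd) x y x' y'

theorem le_add_of_dist_lt (hα : 0 ≤ α) (hd : MemD α Ω d) (he : IsContExt Ω d e) {p q : Ω}
    {x y : closure Ω} {δ : ℝ} (hp : dist x (inclusion subset_closure p) < δ)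
    (hq : dist y (inclusion subset_closure q) < δ) : d p q ≤ e x y + 2 * α * δ := by
  have h := (abs_le.1 (he.abs_sub_le hd (inclusion subset_closure p)
    (inclusion subset_closure q) x y)).2
  rw [he.apply_inclusion, dist_comm _ x, dist_comm _ y] at h
  nlinarith [mul_le_mul_of_nonneg_left (add_le_add hp.le hq.le) hα]

theorem tendsto_apply {dn : ℕ → Ω → Ω → ℝ} {en : ℕ → closure Ω → closure Ω → ℝ} (hα : 0 ≤ α)
    (hdn : ∀ n, MemD α Ω (dn n)) (hconv : TendstoUnifCompactly dn d)
    (hen : ∀ n, IsContExt Ω (dn n) (en n)) (he : IsContExt Ω d e)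
    {xs ys : ℕ → closure Ω} {x y : closure Ω} (hx : Tendsto xs atTop (𝓝 x))
    (hy : Tendsto ys atTop (𝓝 y)) :
    Tendsto (fun n => en n (xs n) (ys n)) atTop (𝓝 (e x y)) := by
  have hlip : ∀ n, LipschitzWith (2 * α).toNNReal fun p : closure Ω × closure Ω => en n p.1 p.2 :=
    fun n => LipschitzWith.of_dist_le_mul fun p q => by
      rw [Real.dist_eq, Real.coe_toNNReal _ (by positivity), Prod.dist_eq]
      refine ((hen n).abs_sub_le (hdn n) _ _ _ _).trans ?_
      nlinarith [le_max_left (dist p.1 q.1) (dist p.2 q.2),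
        le_max_right (dist p.1 q.1) (dist p.2 q.2)]
  exact tendsto_apply_of_lipschitzWith_of_denseRange
    (F := fun n (p : closure Ω × closure Ω) => en n p.1 p.2) hlip he.1
    (denseRange_inclusion_subset_closure.prodMap denseRange_inclusion_subset_closure)
    (fun z => by simpa only [Prod.map, (hen _).apply_inclusion, he.apply_inclusion] using
      hconv.tendsto z.1 z.2) (hx.prodMk_nhds hy)

end IsContExt

end Extension

theorem pathLength_le_liminf {E : Type*} {dn : ℕ → E → E → ℝ} {d : E → E → ℝ}
    {γn : ℕ → ℝ → E} {γ : ℝ → E}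
    (h : ∀ s ∈ Icc (0 : ℝ) 1, ∀ t ∈ Icc (0 : ℝ) 1,
      Tendsto (fun n => dn n (γn n s) (γn n t)) atTop (𝓝 (d (γ s) (γ t)))) :
    pathLength d γ ≤ liminf (fun n => pathLength (dn n) (γn n)) atTop := by
  refine iSup_le fun k => iSup_le fun t => iSup_le fun ht => iSup_le fun h0 => iSup_le fun hk => ?_
  have hmem : ∀ i, t i ∈ Icc (0 : ℝ) 1 := fun i =>
    ⟨h0 ▸ ht (Fin.zero_le i), hk ▸ ht (Fin.le_last i)⟩
  have hsum : Tendsto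
      (fun n => ∑ i : Fin k, ENNReal.ofReal (dn n (γn n (t i.succ)) (γn n (t i.castSucc))))
      atTop (𝓝 (∑ i : Fin k, ENNReal.ofReal (d (γ (t i.succ)) (γ (t i.castSucc))))) :=
    tendsto_finsetSum _ fun i _ => ENNReal.tendsto_ofReal (h _ (hmem _) _ (hmem _))
  rw [← hsum.liminf_eq]
  exact liminf_le_liminf (Eventually.of_forall fun n => sum_le_pathLengthOn k t ht h0 hk)

theorem UnifConvCurves.tendsto {E : Type*} [MetricSpace E] {γn : ℕ → ℝ → E} {γ : ℝ → E}
    (h : UnifConvCurves γn γ) {t : ℝ} (ht : t ∈ Icc (0 : ℝ) 1) :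
    Tendsto (fun n => γn n t) atTop (𝓝 (γ t)) :=
  Metric.tendsto_atTop.2 fun ε hε => (h ε hε).imp fun _ hN n hn => hN n hn t ht

theorem exists_tendsto_atTop_eventually_apply {β : Type*} [Nonempty β] {p : ℕ → ℕ → β → Prop}
    (h : ∀ m, ∀ᶠ n in atTop, ∃ b, p m n b) :
    ∃ φ : ℕ → ℕ, ∃ b : ℕ → β, Tendsto φ atTop atTop ∧ ∀ᶠ n in atTop, p (φ n) n (b n) := by
  choose N hN using fun m => eventually_atTop.1 (h m)
  -- `φ n` is the largest `m ≤ n` whose threshold `N m` has been passed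
  refine ⟨fun n => Nat.findGreatest (fun m => N m ≤ n) n,
    fun n => Classical.epsilon (p (Nat.findGreatest (fun m => N m ≤ n) n) n),
    tendsto_atTop.2 fun m => ?_, ?_⟩
  · filter_upwards [eventually_ge_atTop m, eventually_ge_atTop (N m)] with n hmn hNn
    exact Nat.le_findGreatest hmn hNn
  · filter_upwards [eventually_ge_atTop (N 0)] with n hn
    exact Classical.epsilon_spec
      (hN _ n (Nat.findGreatest_spec (P := fun m => N m ≤ n) n.zero_le hn))

theorem exists_unifConvCurves_limsup_le {E : Type*} [MetricSpace E]
    {F : ℕ → (ℝ → E) → ℝ≥0∞} {γ : ℝ → E} {L : ℝ≥0∞}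
    (hγ : LipCurve (fun x y : E => dist x y) γ)
    (h : ∀ ε > 0, ∀ᶠ n in atTop, ∃ γ' : ℝ → E, LipCurve (fun x y : E => dist x y) γ' ∧
      (∀ t ∈ Icc (0 : ℝ) 1, dist (γ' t) (γ t) ≤ ε) ∧ F n γ' ≤ L + ENNReal.ofReal ε) :
    ∃ γn : ℕ → ℝ → E, (∀ n, LipCurve (fun x y : E => dist x y) (γn n)) ∧
      UnifConvCurves γn γ ∧ limsup (fun n => F n (γn n)) atTop ≤ L := by
  have : Nonempty {γ' : ℝ → E // LipCurve (fun x y : E => dist x y) γ'} := ⟨⟨γ, hγ⟩⟩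
  obtain ⟨φ, γn, hφ, hγn⟩ := exists_tendsto_atTop_eventually_apply
    (p := fun m n (γ' : {γ' : ℝ → E // LipCurve (fun x y : E => dist x y) γ'}) =>
      (∀ t ∈ Icc (0 : ℝ) 1, dist (γ'.1 t) (γ t) ≤ 1 / ((m : ℝ) + 1)) ∧
        F n γ' ≤ L + ENNReal.ofReal (1 / ((m : ℝ) + 1)))
    fun m => (h _ Nat.one_div_pos_of_nat).mono fun n ⟨γ', hγ', hγ'γ⟩ => ⟨⟨γ', hγ'⟩, hγ'γ⟩
  have hε : Tendsto (fun n => 1 / ((φ n : ℝ) + 1)) atTop (𝓝 0) :=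
    tendsto_one_div_add_atTop_nhds_zero_nat.comp hφ
  refine ⟨fun n => (γn n).1, fun n => (γn n).2, fun ε hε' => ?_, ?_⟩
  · refine eventually_atTop.1 ((hγn.and (hε.eventually (gt_mem_nhds hε'))).mono ?_)
    exact fun n hn t ht => (hn.1.1 t ht).trans_lt hn.2
  · have hlim : Tendsto (fun n => L + ENNReal.ofReal (1 / ((φ n : ℝ) + 1))) atTop (𝓝 L) := by
      simpa using tendsto_const_nhds.add (ENNReal.tendsto_ofReal hε)
    exact (limsup_le_limsup (hγn.mono fun n hn => hn.2)).trans hlim.limsup_eq.le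

section Recovery

variable {X : Type*} [MetricSpace X] {Ω : Set X} {α : ℝ} {dn : ℕ → Ω → Ω → ℝ}
  {d : Ω → Ω → ℝ} {en : ℕ → closure Ω → closure Ω → ℝ} {e : closure Ω → closure Ω → ℝ}

theorem exists_lipCurve_chain_pathLength_le {d' : Ω → Ω → ℝ} (hα : 0 ≤ α) (hd' : MemD α Ω d')
    (hd : MemD α Ω d) (he : IsContExt Ω d e) {x : ℕ → closure Ω} {q : ℕ → Ω} {δ : ℝ}
    (hδ : 0 < δ) (hq : ∀ j, dist (x j) (inclusion subset_closure (q j)) < δ) {k : ℕ}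
    (hd'q : ∀ j < k, d' (q j) (q (j + 1)) < d (q j) (q (j + 1)) + δ) :
    ∃ σ : ℕ → ℝ → Ω, (∀ j, σ j 1 = σ (j + 1) 0) ∧ (∀ j, LipCurve d' (σ j)) ∧
      (∀ j, σ j 0 = q j) ∧
      ∀ j < k, pathLength d' (σ j) ≤ ENNReal.ofReal (e (x j) (x (j + 1)) + (2 * α + 2) * δ) := by
  choose σ hσlip hσ0 hσ1 hσlen using fun j =>
    hd'.2.1.exists_lipCurve_pathLength_lt (q j) (q (j + 1)) hδ
  refine ⟨σ, fun j => (hσ1 j).trans (hσ0 (j + 1)).symm, hσlip, hσ0, fun j hj => ?_⟩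
  refine (hσlen j).le.trans ?_
  rw [← ENNReal.ofReal_add (hd'.1.nonneg _ _) hδ.le]
  refine ENNReal.ofReal_le_ofReal ?_
  linarith [hd'q j hj, he.le_add_of_dist_lt hα hd (hq j) (hq (j + 1))]

theorem eventually_exists_lipCurve_near_of_grid (hα : 0 < α) (hdn : ∀ n, MemD α Ω (dn n))
    (hd : MemD α Ω d) (hconv : TendstoUnifCompactly dn d)
    (hen : ∀ n, IsContExt Ω (dn n) (en n)) (he : IsContExt Ω d e) {γ : ℝ → closure Ω} {K : ℝ}
    (hγ : ∀ s ∈ Icc (0 : ℝ) 1, ∀ t ∈ Icc (0 : ℝ) 1, dist (γ s) (γ t) ≤ K * |s - t|)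
    {k : ℕ} (hk : 0 < k) {δ : ℝ} (hδ : 0 < δ) :
    ∀ᶠ n in atTop, ∃ γ' : ℝ → closure Ω, LipCurve (fun x y : closure Ω => dist x y) γ' ∧
      (∀ t ∈ Icc (0 : ℝ) 1,
        dist (γ' t) (γ t) ≤ (α ^ 2 + 1) * K / k + (2 * α ^ 2 + 2 * α + 1) * δ) ∧
      pathLength (en n) γ' ≤ pathLength e γ + ENNReal.ofReal (k * ((2 * α + 2) * δ)) := by
  have hkR : (0 : ℝ) < k := Nat.cast_pos.2 hk
  choose q hq using fun j : ℕ =>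
    denseRange_inclusion_subset_closure.exists_dist_lt (γ (j / k)) hδ
  filter_upwards [(Finset.range k).eventually_all.2 fun j _ =>
    (hconv.tendsto (q j) (q (j + 1))).eventually (gt_mem_nhds (lt_add_of_pos_right _ hδ))]
    with n hn
  obtain ⟨σ, hσ, hσlip, hσ0, hpiece⟩ := exists_lipCurve_chain_pathLength_le hα.le (hdn n) hd he
    hδ hq fun j hj => hn j (Finset.mem_range.2 hj)
  push_cast at hpiece
  have hchord : ∀ j < k, e (γ (j / k)) (γ ((j + 1) / k)) ≤ α * (K / k) := fun j hj => by
    refine (he.le_mul_dist hd _ _).trans (mul_le_mul_of_nonneg_left ((hγ _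
      ⟨by positivity, (div_le_one hkR).2 (by exact_mod_cast hj.le)⟩ _
      ⟨by positivity, (div_le_one hkR).2 (by exact_mod_cast hj)⟩).trans_eq ?_) hα.le)
    rw [← sub_div, sub_add_cancel_left, abs_div, abs_neg, abs_one, abs_of_pos hkR, mul_one_div]
  have hstart : ∀ j < k, ∀ τ ∈ Icc (0 : ℝ) 1, dist (inclusion subset_closure (σ j τ)) (γ (j / k))
      ≤ α * (α * (K / k) + (2 * α + 2) * δ) + δ := fun j hj τ hτ => by
    refine (dist_triangle _ (inclusion subset_closure (q j)) _).trans (add_le_add ?_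
      (dist_comm (γ _) _ ▸ hq j).le)
    rw [← hσ0 j]
    refine ((hdn n).dist_le_of_pathLength_le hα hτ
      (add_nonneg (he.nonneg hd.1 _ _) (by positivity)) (hpiece j hj)).trans ?_
    gcongr
    exact hchord j hj
  refine ⟨fun s => inclusion subset_closure (concatCurves σ (k * s)),
    lipCurve_concatCurves (σ := fun j τ => inclusion subset_closure (σ j τ))
      (fun j => congrArg _ (hσ j)) fun j _ =>
        (hσlip j).mono (d' := fun x y : Ω => dist x y) hα.le ((hdn n).dist_le hα),
    fun s hs => (dist_concatCurves_le_add (σ := fun j τ => inclusion subset_closure (σ j τ))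
      (fun j => congrArg _ (hσ j)) hγ hk hstart hs).trans_eq (by ring), ?_⟩
  calc pathLength (en n) (fun s => inclusion subset_closure (concatCurves σ (k * s)))
      = pathLength (dn n) (fun s => concatCurves σ (k * s)) :=
        pathLengthOn_comp_of_dist_eq (hen n).apply_inclusion 0 1
    _ ≤ ∑ j ∈ Finset.range k, (ENNReal.ofReal (e (γ ((j + 1) / k)) (γ (j / k))) +
        ENNReal.ofReal ((2 * α + 2) * δ)) :=
        (pathLength_concatCurves_le_sum (hdn n).1 hσ k).trans <| Finset.sum_le_sum fun j hj =>
          (hpiece j (Finset.mem_range.1 hj)).trans (he.symm hd.1 (γ _) _ ▸ ENNReal.ofReal_add_le)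
    _ ≤ pathLength e γ + ENNReal.ofReal (k * ((2 * α + 2) * δ)) := by
        rw [Finset.sum_add_distrib, Finset.sum_const, Finset.card_range, nsmul_eq_mul,
          ENNReal.ofReal_mul k.cast_nonneg, ENNReal.ofReal_natCast]
        gcongr
        exact sum_range_le_pathLength γ hk

theorem eventually_exists_lipCurve_near_pathLength_le (hα : 0 < α) (hdn : ∀ n, MemD α Ω (dn n))
    (hd : MemD α Ω d) (hconv : TendstoUnifCompactly dn d)
    (hen : ∀ n, IsContExt Ω (dn n) (en n)) (he : IsContExt Ω d e) {γ : ℝ → closure Ω}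
    (hγ : LipCurve (fun x y : closure Ω => dist x y) γ) {ε : ℝ} (hε : 0 < ε) :
    ∀ᶠ n in atTop, ∃ γ' : ℝ → closure Ω, LipCurve (fun x y : closure Ω => dist x y) γ' ∧
      (∀ t ∈ Icc (0 : ℝ) 1, dist (γ' t) (γ t) ≤ ε) ∧
      pathLength (en n) γ' ≤ pathLength e γ + ENNReal.ofReal ε := by
  obtain ⟨K, hK⟩ := hγ
  obtain ⟨k, hkK, hk⟩ := (((tendsto_const_div_atTop_nhds_zero_nat ((α ^ 2 + 1) * K)).eventually
    (gt_mem_nhds (half_pos hε))).and (eventually_gt_atTop 0)).exists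
  obtain ⟨δ₁, hδ₁, h₁⟩ := exists_pos_mul_lt (half_pos hε) (2 * α ^ 2 + 2 * α + 1)
  obtain ⟨δ₂, hδ₂, h₂⟩ := exists_pos_mul_lt hε (k * (2 * α + 2))
  filter_upwards [eventually_exists_lipCurve_near_of_grid hα hdn hd hconv hen he hK hk
    (lt_min hδ₁ hδ₂)] with n ⟨γ', hγ', hclose, hlen⟩
  have hmin₁ := mul_le_mul_of_nonneg_left (min_le_left δ₁ δ₂)
    (by positivity : (0 : ℝ) ≤ 2 * α ^ 2 + 2 * α + 1)
  have hmin₂ := mul_le_mul_of_nonneg_left (min_le_right δ₁ δ₂)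
    (by positivity : (0 : ℝ) ≤ k * (2 * α + 2))
  refine ⟨γ', hγ', fun t ht => (hclose t ht).trans (by linarith), hlen.trans ?_⟩
  gcongr
  linarith [mul_assoc (k : ℝ) (2 * α + 2) (min δ₁ δ₂)]

end Recovery

theorem stmt7_general {X : Type*} [MetricSpace X]
    (Ω : Set X) (α : ℝ) (hα : 1 < α)
    (dn : ℕ → Ω → Ω → ℝ) (hdn : ∀ n, MemD α Ω (dn n))
    (d : Ω → Ω → ℝ) (hd : MemD α Ω d)
    (hconv : TendstoUnifCompactly dn d)
    (en : ℕ → closure Ω → closure Ω → ℝ) (hen : ∀ n, IsContExt Ω (dn n) (en n))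
    (e : closure Ω → closure Ω → ℝ) (he : IsContExt Ω d e) :
    GammaConvLengths en e := by
  have hα₀ : 0 < α := zero_lt_one.trans hα
  refine ⟨fun γn γ _ _ hγn => ?_, fun γ hγ => ?_⟩
  · exact pathLength_le_liminf fun s hs t ht =>
      he.tendsto_apply hα₀.le hdn hconv hen (hγn.tendsto hs) (hγn.tendsto ht)
  · exact exists_unifConvCurves_limsup_le hγ fun ε hε =>
      eventually_exists_lipCurve_near_pathLength_le hα₀ hdn hd hconv hen he hγ hε

/-- uniform convergence of the distances on compact sets implies
Γ-convergence of the length functionals of the extended distances on Lipschitz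
curves into the closure of `Ω`. -/
theorem stmt7 {X : Type*} [MetricSpace X] [LocallyCompactSpace X] [CompleteSpace X]
    (Ω : Set X) (hΩ : IsOpen Ω) (α : ℝ) (hα : 1 < α)
    (hne : ∃ d₀ : Ω → Ω → ℝ, MemD α Ω d₀)
    (dn : ℕ → Ω → Ω → ℝ) (hdn : ∀ n, MemD α Ω (dn n))
    (d : Ω → Ω → ℝ) (hd : MemD α Ω d)
    (hconv : TendstoUnifCompactly dn d)
    (en : ℕ → closure Ω → closure Ω → ℝ) (hen : ∀ n, IsContExt Ω (dn n) (en n))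
    (e : closure Ω → closure Ω → ℝ) (he : IsContExt Ω d e) :
    GammaConvLengths en e :=
  stmt7_general Ω α hα dn hdn d hd hconv en hen e he
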